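/- If the Musielak-Orlicz function Φ = (φ_n) satisfies condition δ2, then l_Φ^A(X) = h_Φ^A(X), i.e., every bounded X-valued sequence x̄ with ∑_{n=1}^∞ φ_n((∑_{k=1}^∞ ‖a_{nk} x_k‖)/σ) < ∞ for some σ > 0 satisfies this for every σ > 0. -/
import Mathlib


open Filter Topology

/-- An Orlicz function: convex, nondecreasing, continuous on `[0,∞)`,
vanishing at `0`, positive on `(0,∞)`, tending to `∞` at `∞`. -/
structure IsOrliczFn (φ : ℝ → ℝ) : Prop where
  convexOn : ConvexOn ℝ (Set.Ici (0 : ℝ)) φ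
  monotoneOn : MonotoneOn φ (Set.Ici (0 : ℝ))
  continuousOn : ContinuousOn φ (Set.Ici (0 : ℝ))
  map_zero : φ 0 = 0
  pos : ∀ t : ℝ, 0 < t → 0 < φ t
  tendsto_atTop : Filter.Tendsto φ Filter.atTop Filter.atTop

/-- A Musielak-Orlicz function: a sequence of Orlicz functions. -/
def IsMusielakOrlicz (Φ : ℕ → ℝ → ℝ) : Prop := ∀ n, IsOrliczFn (Φ n)

/-- Condition δ₂ for a Musielak-Orlicz function. -/
def MOCondDelta2 (Φ : ℕ → ℝ → ℝ) : Prop :=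
  ∃ K > (0 : ℝ), ∃ δ > (0 : ℝ), ∃ c : ℕ → ℝ, (∀ n, 0 ≤ c n) ∧ Summable c ∧
    ∀ n : ℕ, ∀ x : ℝ, 0 ≤ x → Φ n x ≤ δ → Φ n (2 * x) ≤ K * Φ n x + c n

/-- Condition (*) for a Musielak-Orlicz function. -/
def MOCondStar (Φ : ℕ → ℝ → ℝ) : Prop :=
  ∀ ε : ℝ, ε ∈ Set.Ioo (0 : ℝ) 1 → ∃ δ > (0 : ℝ), ∀ n : ℕ, ∀ u : ℝ, 0 ≤ u →
    Φ n u < 1 - ε → Φ n ((1 + δ) * u) ≤ 1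

/-- The class 𝒜 of infinite matrices: every column is nonzero. -/
def MatrixClassA (a : ℕ → ℕ → ℝ) : Prop := ∀ k, ∃ n, a n k ≠ 0

/-- A triangle matrix: nonzero diagonal, zero above the diagonal. -/
def IsTriangle (a : ℕ → ℕ → ℝ) : Prop := (∀ n, a n n ≠ 0) ∧ ∀ n k, n < k → a n k = 0

/-- The `n`-th row sum `∑_k |a_{nk}| ‖x_k‖`. -/
noncomputable def rowSum {X : Type*} [NormedAddCommGroup X]
    (a : ℕ → ℕ → ℝ) (x : ℕ → X) (n : ℕ) : ℝ :=
  ∑' k, |a n k| * ‖x k‖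

/-- Membership in the generalized Musielak-Orlicz sequence space `l_Φ^A(X)`:
`x` is a bounded sequence whose row sums are finite and
`∑_n φ_n(rowSum_n / σ) < ∞` for some `σ > 0`. -/
def MemL {X : Type*} [NormedAddCommGroup X]
    (Φ : ℕ → ℝ → ℝ) (a : ℕ → ℕ → ℝ) (x : ℕ → X) : Prop :=
  (∃ C : ℝ, ∀ k, ‖x k‖ ≤ C) ∧ (∀ n, Summable fun k => |a n k| * ‖x k‖) ∧
    ∃ σ > (0 : ℝ), Summable fun n => Φ n (rowSum a x n / σ)

/-- Membership in `h_Φ^A(X)`: as `MemL` but for every `σ > 0`. -/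
def MemH {X : Type*} [NormedAddCommGroup X]
    (Φ : ℕ → ℝ → ℝ) (a : ℕ → ℕ → ℝ) (x : ℕ → X) : Prop :=
  (∃ C : ℝ, ∀ k, ‖x k‖ ≤ C) ∧ (∀ n, Summable fun k => |a n k| * ‖x k‖) ∧
    ∀ σ > (0 : ℝ), Summable fun n => Φ n (rowSum a x n / σ)

/-- The Luxemburg-type norm `‖x‖_Φ^A`. -/
noncomputable def ANorm {X : Type*} [NormedAddCommGroup X]
    (Φ : ℕ → ℝ → ℝ) (a : ℕ → ℕ → ℝ) (x : ℕ → X) : ℝ :=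
  sInf {σ : ℝ | 0 < σ ∧ (Summable fun n => Φ n (rowSum a x n / σ)) ∧
    (∑' n, Φ n (rowSum a x n / σ)) ≤ 1}

/-- The modular `ρ_Φ^A(x) = ∑_n φ_n(∑_k |a_{nk}| ‖x_k‖)`. -/
noncomputable def rhoA {X : Type*} [NormedAddCommGroup X]
    (Φ : ℕ → ℝ → ℝ) (a : ℕ → ℕ → ℝ) (x : ℕ → X) : ℝ :=
  ∑' n, Φ n (rowSum a x n)

/-- The `m`-th section of a sequence: first `m` coordinates kept, rest zero. -/
def sect {X : Type*} [Zero X] (x : ℕ → X) (m : ℕ) : ℕ → X :=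
  fun k => if k < m then x k else 0

lemma orlicz_nonneg {φ : ℝ → ℝ} (h : IsOrliczFn φ) {t : ℝ} (ht : 0 ≤ t) : 0 ≤ φ t := by
  have := h.monotoneOn Set.self_mem_Ici ht ht
  rw [h.map_zero] at this
  exact this

lemma rowSum_nonneg {X : Type*} [NormedAddCommGroup X] (a : ℕ → ℕ → ℝ) (x : ℕ → X) (n : ℕ) :
    0 ≤ rowSum a x n :=
  tsum_nonneg fun k => mul_nonneg (abs_nonneg _) (norm_nonneg _)

lemma summable_halve (Φ : ℕ → ℝ → ℝ) (hΦ : IsMusielakOrlicz Φ) (hδ : MOCondDelta2 Φ)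
    (r : ℕ → ℝ) (hr : ∀ n, 0 ≤ r n) {σ : ℝ} (hσ : 0 < σ)
    (hs : Summable fun n => Φ n (r n / σ)) :
    Summable fun n => Φ n (r n / (σ / 2)) := by
  obtain ⟨K, hK, δ, hδ0, c, hc0, hcs, hKd⟩ := hδ
  have hterm : Tendsto (fun n => Φ n (r n / σ)) atTop (𝓝 0) := hs.tendsto_atTop_zero
  obtain ⟨N, hN⟩ := (hterm.eventually (gt_mem_nhds hδ0)).exists_forall_of_atTop
  have hx : ∀ n, 0 ≤ r n / σ := fun n => div_nonneg (hr n) hσ.le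
  have key : ∀ n ≥ N, Φ n (r n / (σ / 2)) ≤ K * Φ n (r n / σ) + c n := by
    intro n hn
    have h2 : r n / (σ / 2) = 2 * (r n / σ) := by field_simp
    rw [h2]
    exact hKd n _ (hx n) (hN n hn).le
  rw [← summable_nat_add_iff N]
  apply Summable.of_nonneg_of_le
  · intro n
    exact orlicz_nonneg (hΦ _) (div_nonneg (hr _) (by linarith))
  · intro n
    exact key (n + N) (Nat.le_add_left _ _)
  · exact ((hs.mul_left K).add hcs).comp_injective (add_left_injective N)

lemma summable_pow (Φ : ℕ → ℝ → ℝ) (hΦ : IsMusielakOrlicz Φ) (hδ : MOCondDelta2 Φ)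
    (r : ℕ → ℝ) (hr : ∀ n, 0 ≤ r n) {σ : ℝ} (hσ : 0 < σ)
    (hs : Summable fun n => Φ n (r n / σ)) (m : ℕ) :
    Summable fun n => Φ n (r n / (σ / 2 ^ m)) := by
  induction m with
  | zero => simpa using hs
  | succ m ih =>
    have : σ / 2 ^ (m + 1) = (σ / 2 ^ m) / 2 := by ring
    rw [this]
    exact summable_halve Φ hΦ hδ r hr (by positivity) ih

/-- if `Φ ∈ δ₂`, then `l_Φ^A(X) = h_Φ^A(X)`. -/
theorem lPhiA_eq_hPhiA_of_delta2
    {X : Type*} [NormedAddCommGroup X] [NormedSpace ℝ X] [CompleteSpace X]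
    (Φ : ℕ → ℝ → ℝ) (hΦ : IsMusielakOrlicz Φ) (hδ : MOCondDelta2 Φ)
    (a : ℕ → ℕ → ℝ) :
    ∀ x : ℕ → X, MemL Φ a x ↔ MemH Φ a x := by
  intro x
  constructor
  · rintro ⟨hC, hrow, σ₀, hσ₀, hs⟩
    refine ⟨hC, hrow, fun σ hσ => ?_⟩
    obtain ⟨m, hm⟩ := pow_unbounded_of_one_lt (σ₀ / σ) (one_lt_two (α := ℝ))
    have hmeq : σ₀ / 2 ^ m ≤ σ := by
      rw [div_le_iff₀ (by positivity)]
      rw [div_lt_iff₀ hσ] at hm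
      nlinarith [pow_pos (zero_lt_two (α := ℝ)) m]
    have hsm := summable_pow Φ hΦ hδ (rowSum a x) (rowSum_nonneg a x) hσ₀ hs m
    apply Summable.of_nonneg_of_le
      (fun n => orlicz_nonneg (hΦ n) (div_nonneg (rowSum_nonneg a x n) hσ.le))
      (fun n => ?_) hsm
    apply (hΦ n).monotoneOn
    · exact div_nonneg (rowSum_nonneg a x n) hσ.le
    · exact div_nonneg (rowSum_nonneg a x n) (by positivity)
    · exact div_le_div_of_nonneg_left (rowSum_nonneg a x n) (by positivity) hmeq
  · rintro ⟨hC, hrow, h⟩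
    exact ⟨hC, hrow, 1, one_pos, h 1 one_pos⟩
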